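/- Prove the ε=1 analogue: ∑_{k=0}^{n} [n choose k]_{q²} (-1)^k a^{2k} q^{2C(k,2)} · (1/(q;q²)_{n-k+1}) ∑_{s=0}^{2(n-k)+1} [2(n-k)+1 choose s]_q a^s = (-a;q)_{2n+1}/(q;q²)_{n+1}. -/
import Mathlib


open Finset

/-- The q-Pochhammer symbol `(x;q)_n = ∏_{i=0}^{n-1} (1 - x qⁱ)`. -/
noncomputable def qPoch {K : Type*} [Field K] (x q : K) (n : ℕ) : K :=
  ∏ i ∈ Finset.range n, (1 - x * q ^ i)

/-- The Gaussian binomial coefficient `[n choose k]_q`. -/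
noncomputable def qBinom {K : Type*} [Field K] (q : K) (n k : ℕ) : K :=
  qPoch q q n / (qPoch q q k * qPoch q q (n - k))

/-- Cigler's moment sequence `P_n(a)`. -/
noncomputable def cigP {K : Type*} [Field K] (a q : K) (n : ℕ) : K :=
  (1 / qPoch q (q ^ 2) ((n + 1) / 2)) * ∑ k ∈ Finset.range (n + 1), qBinom q n k * a ^ k

/-- The recurrence coefficients `λ_n` of Definition 1. -/
noncomputable def cigLam {K : Type*} [Field K] (a q : K) (n : ℕ) : K :=
  if Even n then
    q ^ n * (1 + a) ^ 2 * (1 - q ^ (n - 1)) * (1 - q ^ n) / (1 - q ^ (2 * n - 1)) ^ 2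
  else
    -((a + q ^ n) * (a + q ^ (n - 1)) * (1 + a * q ^ (n - 1)) * (1 + a * q ^ n)) /
      ((1 + a) ^ 2 * (1 - q ^ (2 * n - 1)) ^ 2)

/-- The recurrence coefficients `b_n` of Definition 1 (integer exponents via `zpow`). -/
noncomputable def cigB {K : Type*} [Field K] (a q : K) (n : ℕ) : K :=
  if Even n then
    -(1 - q) / ((1 - q ^ (2 * (n : ℤ) + 1)) * (1 - q ^ (2 * (n : ℤ) - 1)) * (1 + a)) *
      (a * (1 - q ^ (2 * (n : ℤ) - 1)) * (1 - q ^ ((n : ℤ) + 1)) * (1 - q ^ (n : ℤ)) / (1 - q)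
        - q ^ (n : ℤ) * ((1 - q ^ ((n : ℤ) - 1)) / (1 - q)
            + q ^ ((n : ℤ) + 1) * (1 - q ^ (n : ℤ)) / (1 - q)) * (1 + a) ^ 2)
  else
    (1 - q) / ((1 - q ^ (2 * (n : ℤ) + 1)) * (1 - q ^ (2 * (n : ℤ) - 1)) * (1 + a)) *
      (a * (1 - q ^ (2 * (n : ℤ) + 1)) * (1 - q ^ ((n : ℤ) - 1)) * (1 - q ^ (n : ℤ)) / (1 - q)
        - q ^ ((n : ℤ) + 1) * ((1 - q ^ (n : ℤ)) / (1 - q)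
            + q ^ ((n : ℤ) - 2) * (1 - q ^ ((n : ℤ) + 1)) / (1 - q)) * (1 + a) ^ 2)

/-- The even-indexed expansion coefficients `a_{2k}^{(n)}` of Proposition 2. -/
noncomputable def aEven {K : Type*} [Field K] (a q : K) (n k : ℕ) : K :=
  qPoch (-(a * q ^ (2 * (n : ℤ) - 1))) q⁻¹ (2 * k) /
      qPoch (q ^ (4 * (n : ℤ) - 2 * (k : ℤ) - 1)) (q ^ 2)⁻¹ k * qBinom (q ^ 2) n k

/-- The odd-indexed expansion coefficients `a_{2k+1}^{(n)}` of Proposition 2. -/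
noncomputable def aOdd {K : Type*} [Field K] (a q : K) (n k : ℕ) : K :=
  (1 + a) * qPoch (-(a * q ^ (2 * (n : ℤ) - 1))) q⁻¹ (2 * k) /
      qPoch (q ^ (4 * (n : ℤ) - 2 * (k : ℤ) - 1)) (q ^ 2)⁻¹ (k + 1) *
    qBinom (q ^ 2) n (k + 1) * (1 - q ^ (2 * (k + 1)))


section OCX
set_option linter.unusedSectionVars false
set_option maxHeartbeats 1600000

lemma ocx_chooseS (x : ℕ) : Nat.choose (x+1) 2 = Nat.choose x 2 + x := by
  rw [Nat.choose_succ_succ, Nat.choose_one_right, Nat.add_comm]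

lemma ocx_twoC : ∀ k : ℕ, 2 * Nat.choose k 2 = k * (k-1)
  | 0 => rfl
  | (m+1) => by
      rw [Nat.choose_succ_succ, Nat.choose_one_right, Nat.mul_add, ocx_twoC m,
          Nat.add_sub_cancel]
      cases m with
      | zero => rfl
      | succ l => simp [Nat.succ_sub_one]; ring

/-- extended Gaussian binomial: zero out of range -/
noncomputable def bb {K : Type*} [Field K] (q : K) (m u : ℕ) : K :=
  if u ≤ m then qBinom q m u else 0

variable {K : Type*} [Field K]

lemma qPoch_succ (x q : K) (n : ℕ) :
    qPoch x q (n + 1) = qPoch x q n * (1 - x * q ^ n) := by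
  simp [qPoch, Finset.prod_range_succ]

lemma qPoch_zero' (x q : K) : qPoch x q 0 = 1 := by simp [qPoch]

/-- collapse a sum supported on even indices -/
lemma even_collapse (g : ℕ → K) :
    ∀ N : ℕ, (∀ j, ¬ Even j → g j = 0) →
      ∑ j ∈ Finset.range (N+1), g j = ∑ k ∈ Finset.range (N/2+1), g (2*k) := by
  intro N
  induction N with
  | zero => intro _; simp
  | succ N ih =>
      intro hg
      rw [Finset.sum_range_succ, ih hg]
      rcases Nat.even_or_odd (N+1) with he | ho
      · obtain ⟨m, hm⟩ := he
        have h1 : (N+1)/2 = N/2+1 := by omega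
        rw [h1, Finset.sum_range_succ (fun k => g (2*k)) (N/2+1),
            show 2*(N/2+1) = N+1 by omega]
      · obtain ⟨m, hm⟩ := ho
        rw [hg (N+1) (by simp [Nat.even_iff]; omega), add_zero,
            show (N+1)/2 = N/2 by omega]

/-- triangle swap -/
lemma tri_swap (M : ℕ) (f : ℕ → ℕ → K) :
    ∑ j ∈ Finset.range (M+1), ∑ u ∈ Finset.range (j+1), f j u
      = ∑ u ∈ Finset.range (M+1), ∑ v ∈ Finset.range (M+1-u), f (u+v) u := by
  rw [Finset.sum_sigma' (Finset.range (M+1)) (fun j => Finset.range (j+1)) (fun j u => f j u),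
      Finset.sum_sigma' (Finset.range (M+1)) (fun u => Finset.range (M+1-u)) (fun u v => f (u+v) u)]
  apply Finset.sum_nbij' (i := fun p => (⟨p.2, p.1 - p.2⟩ : (_ : ℕ) × ℕ))
    (j := fun p => (⟨p.1 + p.2, p.1⟩ : (_ : ℕ) × ℕ))
  · rintro ⟨a, b⟩ hp
    simp only [Finset.mem_sigma, Finset.mem_range] at hp ⊢
    omega
  · rintro ⟨a, b⟩ hp
    simp only [Finset.mem_sigma, Finset.mem_range] at hp ⊢
    omega
  · rintro ⟨a, b⟩ hp
    simp only [Finset.mem_sigma, Finset.mem_range] at hp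
    have h : b + (a - b) = a := by omega
    simp [h]
  · rintro ⟨a, b⟩ hp
    simp only [Finset.mem_sigma, Finset.mem_range] at hp
    have h : a + b - a = b := by omega
    simp [h]
  · rintro ⟨a, b⟩ hp
    simp only [Finset.mem_sigma, Finset.mem_range] at hp
    simp only []
    rw [show b + (a - b) = a by omega]

/-- the main sigma reindex -/
lemma ocx_reindex (n : ℕ) (g : ℕ → ℕ → K) :
    ∑ k ∈ Finset.range (n+1), ∑ s ∈ Finset.range (2*(n-k)+2), g k s
      = ∑ t ∈ Finset.range (2*n+2), ∑ k ∈ Finset.range (t/2+1), g k (t-2*k) := by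
  rw [Finset.sum_sigma' (Finset.range (n+1)) (fun k => Finset.range (2*(n-k)+2))
        (fun k s => g k s),
      Finset.sum_sigma' (Finset.range (2*n+2)) (fun t => Finset.range (t/2+1))
        (fun t k => g k (t-2*k))]
  apply Finset.sum_nbij' (i := fun p => (⟨2*p.1+p.2, p.1⟩ : (_ : ℕ) × ℕ))
    (j := fun p => (⟨p.2, p.1 - 2*p.2⟩ : (_ : ℕ) × ℕ))
  · rintro ⟨k, s⟩ hp
    simp only [Finset.mem_sigma, Finset.mem_range] at hp ⊢
    omega
  · rintro ⟨t, k⟩ hp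
    simp only [Finset.mem_sigma, Finset.mem_range] at hp ⊢
    omega
  · rintro ⟨k, s⟩ hp
    simp only [Finset.mem_sigma, Finset.mem_range] at hp
    have h : 2*k+s - 2*k = s := by omega
    simp [h]
  · rintro ⟨t, k⟩ hp
    simp only [Finset.mem_sigma, Finset.mem_range] at hp
    have h : 2*k + (t - 2*k) = t := by omega
    simp [h]
  · rintro ⟨k, s⟩ hp
    simp only [Finset.mem_sigma, Finset.mem_range] at hp
    simp only []
    rw [show 2*k+s - 2*k = s by omega]

variable (q : K) (hq : ∀ i : ℕ, 1 ≤ i → q ^ i ≠ 1)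
include hq
lemma hP (m : ℕ) : qPoch q q m ≠ 0 := by
  rw [qPoch]
  apply Finset.prod_ne_zero_iff.2
  intro i _
  have : q * q ^ i = q ^ (i+1) := by ring
  rw [this]
  exact sub_ne_zero.2 fun h => (hq (i+1) (by omega)) h.symm

lemma hP2 (m : ℕ) : qPoch (q^2) (q^2) m ≠ 0 := by
  rw [qPoch]
  apply Finset.prod_ne_zero_iff.2
  intro i _
  have : q^2 * (q^2) ^ i = q ^ (2*i+2) := by rw [← pow_mul]; ring
  rw [this]
  exact sub_ne_zero.2 fun h => (hq (2*i+2) (by omega)) h.symm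

lemma hR (m : ℕ) : qPoch q (q^2) m ≠ 0 := by
  rw [qPoch]
  apply Finset.prod_ne_zero_iff.2
  intro i _
  have : q * (q^2) ^ i = q ^ (2*i+1) := by rw [← pow_mul]; ring
  rw [this]
  exact sub_ne_zero.2 fun h => (hq (2*i+1) (by omega)) h.symm

-- parity factorization
lemma parity_even : ∀ m : ℕ, qPoch q q (2*m) = qPoch q (q^2) m * qPoch (q^2) (q^2) m := by
  intro m
  induction m with
  | zero => simp [qPoch]
  | succ m ih =>
      have h1 : 2*(m+1) = (2*m+1)+1 := by ring
      have e1 : q * q ^ (2*m) = q * (q^2)^m := by rw [← pow_mul]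
      have e2 : q * q ^ (2*m+1) = q^2 * (q^2)^m := by rw [← pow_mul]; ring
      rw [h1, qPoch_succ, qPoch_succ, ih, qPoch_succ, qPoch_succ, e1, e2]
      ring

lemma parity_odd (m : ℕ) : qPoch q q (2*m+1) = qPoch q (q^2) (m+1) * qPoch (q^2) (q^2) m := by
  rw [qPoch_succ, parity_even q hq, qPoch_succ]
  rw [show q * q^(2*m) = q * (q^2)^m by rw [← pow_mul]]
  ring

lemma bb_of_le {m u : ℕ} (h : u ≤ m) : bb q m u = qBinom q m u := if_pos h

lemma bb_zero (m : ℕ) : bb q m 0 = 1 := by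
  rw [bb, if_pos (Nat.zero_le m), qBinom, qPoch_zero', one_mul, Nat.sub_zero,
      div_self (hP q hq m)]

lemma bb_self (m : ℕ) : bb q m m = 1 := by
  rw [bb, if_pos le_rfl, qBinom, Nat.sub_self, qPoch_zero', mul_one, div_self (hP q hq m)]

lemma bb_gt {m u : ℕ} (h : m < u) : bb q m u = 0 := if_neg (by omega)

lemma bb_pascal1 (m u : ℕ) :
    bb q (m+1) (u+1) = bb q m (u+1) + q^(m-u) * bb q m u := by
  rcases le_or_gt (u+1) m with h | h
  · obtain ⟨j, hj⟩ := Nat.exists_eq_add_of_le h  -- m = u+1+j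
    subst hj
    rw [bb_of_le q hq (by omega), bb_of_le q hq (by omega), bb_of_le q hq (by omega)]
    rw [qBinom, qBinom, qBinom,
        show u+1+j+1 - (u+1) = j+1 by omega, show u+1+j - (u+1) = j by omega,
        show u+1+j - u = j+1 by omega,
        show u+1+j+1 = (u+1+j)+1 by omega]
    rw [qPoch_succ q q (u+1+j), qPoch_succ q q j, qPoch_succ q q u]
    have hu := hP q hq u
    have hj' := hP q hq j
    have hc := hP q hq (u+1+j)
    have h1 : (1 - q * q ^ u) ≠ 0 := by
      rw [show q * q^u = q^(u+1) by ring]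
      exact sub_ne_zero.2 fun hh => (hq (u+1) (by omega)) hh.symm
    have h2 : (1 - q * q ^ j) ≠ 0 := by
      rw [show q * q^j = q^(j+1) by ring]
      exact sub_ne_zero.2 fun hh => (hq (j+1) (by omega)) hh.symm
    have key : 1 - q * q^(u+1+j) = (1 - q*q^j) + (q*q^j)*(1 - q*q^u) := by ring
    rw [key, show (q:K)^(j+1) = q*q^j by ring]
    field_simp
  · rcases Nat.lt_or_ge m u with h2 | h2
    · rw [bb_gt q hq (by omega), bb_gt q hq (by omega), bb_gt q hq (by omega)]; ring
    · have : u = m := by omega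
      subst this
      rw [bb_self q hq, bb_self q hq, bb_gt q hq (by omega), Nat.sub_self, pow_zero]
      ring

lemma bb_pascal2 (m u : ℕ) :
    bb q (m+1) (u+1) = q^(u+1) * bb q m (u+1) + bb q m u := by
  rcases le_or_gt (u+1) m with h | h
  · obtain ⟨j, hj⟩ := Nat.exists_eq_add_of_le h
    subst hj
    rw [bb_of_le q hq (by omega), bb_of_le q hq (by omega), bb_of_le q hq (by omega)]
    rw [qBinom, qBinom, qBinom,
        show u+1+j+1 - (u+1) = j+1 by omega, show u+1+j - (u+1) = j by omega,
        show u+1+j - u = j+1 by omega,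
        show u+1+j+1 = (u+1+j)+1 by omega]
    rw [qPoch_succ q q (u+1+j), qPoch_succ q q j, qPoch_succ q q u]
    have hu := hP q hq u
    have hj' := hP q hq j
    have hc := hP q hq (u+1+j)
    have h1 : (1 - q * q ^ u) ≠ 0 := by
      rw [show q * q^u = q^(u+1) by ring]
      exact sub_ne_zero.2 fun hh => (hq (u+1) (by omega)) hh.symm
    have h2 : (1 - q * q ^ j) ≠ 0 := by
      rw [show q * q^j = q^(j+1) by ring]
      exact sub_ne_zero.2 fun hh => (hq (j+1) (by omega)) hh.symm
    have key : 1 - q * q^(u+1+j) = (q*q^u)*(1 - q*q^j) + (1 - q*q^u) := by ring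
    rw [key, show (q:K)^(u+1) = q*q^u by ring]
    field_simp
  · rcases Nat.lt_or_ge m u with h2 | h2
    · rw [bb_gt q hq (by omega), bb_gt q hq (by omega), bb_gt q hq (by omega)]; ring
    · have : u = m := by omega
      subst this
      rw [bb_self q hq, bb_self q hq, bb_gt q hq (by omega)]
      ring

lemma bb_symm {m u : ℕ} (h : u ≤ m) : bb q m u = bb q m (m - u) := by
  rw [bb_of_le q hq h, bb_of_le q hq (by omega), qBinom, qBinom,
      Nat.sub_sub_self h, mul_comm]

/-- generic Pascal-1 sum step -/
lemma sumP1 (t : ℕ) (w : ℕ → K) :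
    ∑ u ∈ Finset.range (t+2), w u * bb q (t+1) u
      = ∑ u ∈ Finset.range (t+1), w u * bb q t u
        + ∑ u ∈ Finset.range (t+1), w (u+1) * q^(t-u) * bb q t u := by
  rw [Finset.sum_range_succ' (fun u => w u * bb q (t+1) u) (t+1)]
  have step : ∀ u ∈ Finset.range (t+1),
      w (u+1) * bb q (t+1) (u+1)
        = w (u+1) * bb q t (u+1) + w (u+1) * q^(t-u) * bb q t u := by
    intro u _
    rw [bb_pascal1 q hq]
    ring
  rw [Finset.sum_congr rfl step, Finset.sum_add_distrib]
  have shift : ∑ u ∈ Finset.range (t+1), w (u+1) * bb q t (u+1)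
      = ∑ u ∈ Finset.range (t+1), w u * bb q t u - w 0 := by
    have h0 : ∑ u ∈ Finset.range (t+2), w u * bb q t u
        = (∑ u ∈ Finset.range (t+1), w (u+1) * bb q t (u+1)) + w 0 * bb q t 0 :=
      Finset.sum_range_succ' (fun u => w u * bb q t u) (t+1)
    rw [Finset.sum_range_succ] at h0
    rw [bb_gt q hq (by omega), bb_zero q hq] at h0
    -- h0 : ∑_{range(t+1)} + 0 = shifted + w 0
    rw [mul_zero, add_zero, mul_one] at h0
    rw [h0]
    ring
  rw [shift, bb_zero q hq, mul_one]
  ring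

/-- generic Pascal-2 sum step -/
lemma sumP2 (t : ℕ) (w : ℕ → K) :
    ∑ u ∈ Finset.range (t+2), w u * bb q (t+1) u
      = ∑ u ∈ Finset.range (t+1), w u * q^u * bb q t u
        + ∑ u ∈ Finset.range (t+1), w (u+1) * bb q t u := by
  rw [Finset.sum_range_succ' (fun u => w u * bb q (t+1) u) (t+1)]
  have step : ∀ u ∈ Finset.range (t+1),
      w (u+1) * bb q (t+1) (u+1)
        = w (u+1) * q^(u+1) * bb q t (u+1) + w (u+1) * bb q t u := by
    intro u _
    rw [bb_pascal2 q hq]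
    ring
  rw [Finset.sum_congr rfl step, Finset.sum_add_distrib]
  have shift : ∑ u ∈ Finset.range (t+1), w (u+1) * q^(u+1) * bb q t (u+1)
      = ∑ u ∈ Finset.range (t+1), w u * q^u * bb q t u - w 0 := by
    have h0 : ∑ u ∈ Finset.range (t+2), w u * q^u * bb q t u
        = (∑ u ∈ Finset.range (t+1), w (u+1) * q^(u+1) * bb q t (u+1)) + w 0 * q^0 * bb q t 0 :=
      Finset.sum_range_succ' (fun u => w u * q^u * bb q t u) (t+1)
    rw [Finset.sum_range_succ] at h0
    rw [bb_gt q hq (by omega), bb_zero q hq] at h0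
    rw [mul_zero, add_zero, mul_one, pow_zero, mul_one] at h0
    rw [h0]
    ring
  rw [shift, bb_zero q hq, mul_one]
  ring

/-- Gauss binomial theorem -/
lemma gauss (x : K) : ∀ m : ℕ,
    ∑ u ∈ Finset.range (m+1), q^(Nat.choose u 2) * x^u * bb q m u = qPoch (-x) q m := by
  intro m
  induction m with
  | zero => simp [qPoch, bb_zero q hq]
  | succ m ih =>
      rw [show m+1+1 = m+2 by omega,
          sumP1 q hq m (fun u => q^(Nat.choose u 2) * x^u)]
      have e1 : ∀ u ∈ Finset.range (m+1),
          q^(Nat.choose (u+1) 2) * x^(u+1) * q^(m-u) * bb q m u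
            = (x * q^m) * (q^(Nat.choose u 2) * x^u * bb q m u) := by
        intro u hu
        have hu' : u ≤ m := by simpa using Nat.lt_succ_iff.1 (Finset.mem_range.1 hu)
        rw [show Nat.choose (u+1) 2 = Nat.choose u 2 + u by
              rw [Nat.choose_succ_succ u 1, Nat.choose_one_right, Nat.add_comm]]
        rw [pow_add, pow_succ]
        rw [show q ^ Nat.choose u 2 * q ^ u * (x^u * x) * q^(m-u)
              = (x * (q^u * q^(m-u))) * (q^(Nat.choose u 2) * x^u) by ring]
        rw [← pow_add, show u + (m-u) = m by omega]
        ring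
      rw [Finset.sum_congr rfl e1, ← Finset.mul_sum, ih, qPoch_succ]
      ring

noncomputable def Wsum (q : K) (t : ℕ) : K :=
  ∑ u ∈ Finset.range (t+1), (-1:K)^u * q^(Nat.choose u 2 + Nat.choose (t-u) 2) * bb q t u

noncomputable def Wplus (q : K) (t : ℕ) : K :=
  ∑ u ∈ Finset.range (t+1), (-1:K)^u * q^(Nat.choose u 2 + Nat.choose (t-u) 2 + u) * bb q t u

lemma Wsym (t : ℕ) :
    ∑ u ∈ Finset.range (t+1),
        (-1:K)^u * q^(Nat.choose u 2 + Nat.choose (t-u) 2 + (t-u)) * bb q t u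
      = (-1)^t * Wplus q t := by
  rw [Wplus, Finset.mul_sum]
  rw [← Finset.sum_range_reflect
    (fun u => (-1:K)^t * ((-1:K)^u * q^(Nat.choose u 2 + Nat.choose (t-u) 2 + u) * bb q t u)) (t+1)]
  apply Finset.sum_congr rfl
  intro u hu
  have hu' : u ≤ t := by have := Finset.mem_range.1 hu; omega
  simp only [show t+1-1-u = t-u by omega]
  have h1 : t - (t-u) = u := by omega
  rw [h1, ← bb_symm q hq hu']
  have h2 : ((-1:K))^t * (-1:K)^(t-u) = (-1:K)^u := by
    have h3 : ((-1:K))^t = (-1:K)^(t-u) * (-1:K)^u := by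
      rw [← pow_add, show t-u+u = t by omega]
    rw [h3, show ((-1:K))^(t-u) * (-1:K)^u * (-1:K)^(t-u)
          = ((-1:K)^(t-u))^2 * (-1:K)^u by ring, ← pow_mul, mul_comm (t-u) 2, pow_mul]
    norm_num
  rw [← h2]
  ring

lemma R1 (t : ℕ) : Wsum q (t+1) = (-1)^t * Wplus q t - q^t * Wsum q t := by
  rw [Wsum, show t+1+1 = t+2 by omega,
      sumP1 q hq t (fun u => (-1:K)^u * q^(Nat.choose u 2 + Nat.choose (t+1-u) 2))]
  have e1 : ∀ u ∈ Finset.range (t+1),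
      (-1:K)^u * q^(Nat.choose u 2 + Nat.choose (t+1-u) 2) * bb q t u
        = (-1:K)^u * q^(Nat.choose u 2 + Nat.choose (t-u) 2 + (t-u)) * bb q t u := by
    intro u hu
    have hu' : u ≤ t := by have := Finset.mem_range.1 hu; omega
    rw [show t+1-u = (t-u)+1 by omega, ocx_chooseS]
    ring
  have e2 : ∀ u ∈ Finset.range (t+1),
      (-1:K)^(u+1) * q^(Nat.choose (u+1) 2 + Nat.choose (t+1-(u+1)) 2) * q^(t-u) * bb q t u
        = (-(q^t)) * ((-1:K)^u * q^(Nat.choose u 2 + Nat.choose (t-u) 2) * bb q t u) := by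
    intro u hu
    have hu' : u ≤ t := by have := Finset.mem_range.1 hu; omega
    have hpow : (q:K)^t = q^u * q^(t-u) := by rw [← pow_add]; congr 1; omega
    rw [show t+1-(u+1) = t-u by omega, ocx_chooseS, hpow]
    ring
  rw [Finset.sum_congr rfl e1, Finset.sum_congr rfl e2, Wsym q hq,
      ← Finset.mul_sum, ← Wsum]
  ring

lemma R2 (t : ℕ) : Wplus q (t+1) = q^t * Wsum q t - q^(t+1) * Wplus q t := by
  rw [Wplus, show t+1+1 = t+2 by omega,
      sumP1 q hq t (fun u => (-1:K)^u * q^(Nat.choose u 2 + Nat.choose (t+1-u) 2 + u))]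
  have e1 : ∀ u ∈ Finset.range (t+1),
      (-1:K)^u * q^(Nat.choose u 2 + Nat.choose (t+1-u) 2 + u) * bb q t u
        = q^t * ((-1:K)^u * q^(Nat.choose u 2 + Nat.choose (t-u) 2) * bb q t u) := by
    intro u hu
    have hu' : u ≤ t := by have := Finset.mem_range.1 hu; omega
    have hpow : (q:K)^t = q^u * q^(t-u) := by rw [← pow_add]; congr 1; omega
    rw [show t+1-u = (t-u)+1 by omega, ocx_chooseS, hpow]
    ring
  have e2 : ∀ u ∈ Finset.range (t+1),
      (-1:K)^(u+1) * q^(Nat.choose (u+1) 2 + Nat.choose (t+1-(u+1)) 2 + (u+1)) * q^(t-u) * bb q t u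
        = (-(q^(t+1))) * ((-1:K)^u * q^(Nat.choose u 2 + Nat.choose (t-u) 2 + u) * bb q t u) := by
    intro u hu
    have hu' : u ≤ t := by have := Finset.mem_range.1 hu; omega
    have hpow : (q:K)^t = q^u * q^(t-u) := by rw [← pow_add]; congr 1; omega
    rw [show t+1-(u+1) = t-u by omega, ocx_chooseS, pow_succ q t, hpow]
    ring
  rw [Finset.sum_congr rfl e1, Finset.sum_congr rfl e2,
      ← Finset.mul_sum, ← Finset.mul_sum, ← Wsum, ← Wplus]
  ring

lemma Wval : ∀ κ : ℕ,
    Wsum q (2*κ) = (-1:K)^κ * q^(κ*(κ-1)) * qPoch q (q^2) κ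
    ∧ Wplus q (2*κ) = q^(2*κ) * ((-1:K)^κ * q^(κ*(κ-1)) * qPoch q (q^2) κ) := by
  intro κ
  induction κ with
  | zero =>
      constructor <;>
      · simp [Wsum, Wplus, bb_zero q hq, qPoch]
  | succ k ih =>
      obtain ⟨h1, h2⟩ := ih
      have hx1 : (q:K)*(q^2)^k = q^(2*k)*q := by rw [← pow_mul]; ring
      have hm1 : (-1:K)^(2*k+1) = -1 := by rw [pow_succ, pow_mul]; norm_num
      have hm2 : (-1:K)^(k+1) = (-1:K)^k * (-1) := pow_succ (-1:K) k
      have he : (q:K)^((k+1)*k) = q^(k*(k-1)) * q^(2*k) := by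
        rw [← pow_add]
        congr 1
        cases k with
        | zero => rfl
        | succ m => simp [Nat.succ_sub_one]; ring
      have hodd : Wsum q (2*k+1) = 0 := by
        rw [R1 q hq, h1, h2, pow_mul]
        norm_num
      have hpodd : Wplus q (2*k+1)
          = q^(2*k) * ((-1:K)^k * q^(k*(k-1)) * qPoch q (q^2) k) * (1 - q*(q^2)^k) := by
        rw [R2 q hq, h1, h2, pow_succ q (2*k), hx1]
        ring
      have hs : Wsum q (2*(k+1)) = (-1:K)^(k+1) * q^((k+1)*k) * qPoch q (q^2) (k+1) := by
        rw [show 2*(k+1) = (2*k+1)+1 by omega, R1 q hq, hodd, hpodd, qPoch_succ,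
            hm1, hm2, he, hx1]
        ring
      refine ⟨by rw [hs]; simp only [Nat.add_sub_cancel], ?_⟩
      rw [show 2*(k+1) = (2*k+1)+1 by omega, R2 q hq, hodd, hpodd, qPoch_succ]
      simp only [Nat.add_sub_cancel]
      rw [he, hm2, hx1, show (q:K)^((2*k+1)+1) = q^(2*k)*q*q by rw [pow_succ, pow_succ]]
      ring


lemma Wsum_odd (κ : ℕ) : Wsum q (2*κ+1) = 0 := by
  obtain ⟨h1, h2⟩ := Wval q hq κ
  rw [R1 q hq, h1, h2, pow_mul]
  norm_num

lemma Wsumval (j : ℕ) :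
    Wsum q j
      = (if Even j then (-1:K)^(j/2) * q^((j/2)*((j/2)-1)) * qPoch q (q^2) (j/2) else 0) := by
  rcases Nat.even_or_odd j with he | ho
  · rw [if_pos he]
    obtain ⟨κ, hκ⟩ := he
    rw [show j = 2*κ by omega, show 2*κ/2 = κ by omega]
    exact (Wval q hq κ).1
  · obtain ⟨κ, hκ⟩ := ho
    rw [if_neg (by simp [Nat.even_iff]; omega), show j = 2*κ+1 by omega]
    exact Wsum_odd q hq κ
noncomputable def Psum (q : K) (t : ℕ) : K :=
  ∑ u ∈ Finset.range (t+1),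
    (-1:K)^u * q^(Nat.choose u 2) * qPoch (-1:K) q (t-u) * bb q t u

noncomputable def Psum2 (q : K) (t : ℕ) : K :=
  ∑ u ∈ Finset.range (t+1),
    (-1:K)^u * q^(Nat.choose u 2 + (t-u)) * qPoch (-1:K) q (t-u) * bb q t u

lemma S1 (t : ℕ) : Psum q (t+1) = (1 - q^t) * Psum q t + Psum2 q t := by
  rw [Psum, show t+1+1 = t+2 by omega,
      sumP1 q hq t (fun u => (-1:K)^u * q^(Nat.choose u 2) * qPoch (-1:K) q (t+1-u))]
  have e1 : ∀ u ∈ Finset.range (t+1),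
      (-1:K)^u * q^(Nat.choose u 2) * qPoch (-1:K) q (t+1-u) * bb q t u
        = (-1:K)^u * q^(Nat.choose u 2) * qPoch (-1:K) q (t-u) * bb q t u
          + (-1:K)^u * q^(Nat.choose u 2 + (t-u)) * qPoch (-1:K) q (t-u) * bb q t u := by
    intro u hu
    have hu' : u ≤ t := by have := Finset.mem_range.1 hu; omega
    rw [show t+1-u = (t-u)+1 by omega, qPoch_succ, pow_add]
    ring
  have e2 : ∀ u ∈ Finset.range (t+1),
      (-1:K)^(u+1) * q^(Nat.choose (u+1) 2) * qPoch (-1:K) q (t+1-(u+1)) * q^(t-u) * bb q t u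
        = (-(q^t)) * ((-1:K)^u * q^(Nat.choose u 2) * qPoch (-1:K) q (t-u) * bb q t u) := by
    intro u hu
    have hu' : u ≤ t := by have := Finset.mem_range.1 hu; omega
    have hpow : (q:K)^t = q^u * q^(t-u) := by rw [← pow_add]; congr 1; omega
    rw [show t+1-(u+1) = t-u by omega, ocx_chooseS, hpow]
    ring
  rw [Finset.sum_congr rfl e1, Finset.sum_congr rfl e2, Finset.sum_add_distrib,
      ← Finset.mul_sum, ← Psum, ← Psum2]
  ring

lemma S2 (t : ℕ) :
    Psum2 q (t+1) = q^(t+1) * (Psum q t + Psum2 q t) - q^t * Psum q t := by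
  rw [Psum2, show t+1+1 = t+2 by omega,
      sumP2 q hq t (fun u => (-1:K)^u * q^(Nat.choose u 2 + (t+1-u)) * qPoch (-1:K) q (t+1-u))]
  have e1 : ∀ u ∈ Finset.range (t+1),
      (-1:K)^u * q^(Nat.choose u 2 + (t+1-u)) * qPoch (-1:K) q (t+1-u) * q^u * bb q t u
        = q^(t+1) * ((-1:K)^u * q^(Nat.choose u 2) * qPoch (-1:K) q (t-u) * bb q t u)
          + q^(t+1) * ((-1:K)^u * q^(Nat.choose u 2 + (t-u)) * qPoch (-1:K) q (t-u) * bb q t u) := by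
    intro u hu
    have hu' : u ≤ t := by have := Finset.mem_range.1 hu; omega
    have hpow : (q:K)^(t+1) = q^u * q^(t+1-u) := by rw [← pow_add]; congr 1; omega
    rw [show t+1-u = (t-u)+1 by omega, qPoch_succ, pow_add, pow_add, hpow,
        show t+1-u = (t-u)+1 by omega, pow_add]
    ring
  have e2 : ∀ u ∈ Finset.range (t+1),
      (-1:K)^(u+1) * q^(Nat.choose (u+1) 2 + (t+1-(u+1))) * qPoch (-1:K) q (t+1-(u+1)) * bb q t u
        = (-(q^t)) * ((-1:K)^u * q^(Nat.choose u 2) * qPoch (-1:K) q (t-u) * bb q t u) := by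
    intro u hu
    have hu' : u ≤ t := by have := Finset.mem_range.1 hu; omega
    have hpow : (q:K)^t = q^u * q^(t-u) := by rw [← pow_add]; congr 1; omega
    rw [show t+1-(u+1) = t-u by omega, ocx_chooseS, pow_add, pow_add, hpow]
    ring
  rw [Finset.sum_congr rfl e1, Finset.sum_congr rfl e2, Finset.sum_add_distrib,
      ← Finset.mul_sum, ← Finset.mul_sum, ← Finset.mul_sum, ← Psum, ← Psum2]
  ring

lemma Pval : ∀ t : ℕ,
    Psum q t = q^(Nat.choose t 2) ∧ Psum2 q t = q^(Nat.choose t 2) * (2*q^t - 1) := by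
  intro t
  induction t with
  | zero =>
      refine ⟨by simp [Psum, bb_zero q hq, qPoch], ?_⟩
      simp [Psum2, bb_zero q hq, qPoch]
      norm_num
  | succ t ih =>
      obtain ⟨h1, h2⟩ := ih
      have hc : (q:K)^(Nat.choose (t+1) 2) = q^(Nat.choose t 2) * q^t := by
        rw [ocx_chooseS, pow_add]
      constructor
      · rw [S1 q hq, h1, h2, hc]; ring
      · rw [S2 q hq, h1, h2, hc, pow_succ q t]; ring

/-- trinomial revision -/
lemma revision {t j u : ℕ} (hu : u ≤ j) (hj : j ≤ t) :
    bb q t j * bb q j u = bb q t u * bb q (t-u) (j-u) := by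
  obtain ⟨v, rfl⟩ := Nat.exists_eq_add_of_le hu  -- j = u + v
  obtain ⟨w, rfl⟩ := Nat.exists_eq_add_of_le hj  -- t = u + v + w
  rw [bb_of_le q hq (by omega), bb_of_le q hq (by omega), bb_of_le q hq (by omega),
      bb_of_le q hq (by omega)]
  rw [qBinom, qBinom, qBinom, qBinom,
      show u+v+w - (u+v) = w by omega, show u+v-u = v by omega,
      show u+v+w-u = v+w by omega, show v+w-v = w by omega]
  have h1 := hP q hq u
  have h2 := hP q hq v
  have h3 := hP q hq w
  have h4 := hP q hq (u+v)
  have h5 := hP q hq (v+w)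
  have h6 := hP q hq (u+v+w)
  field_simp

/-- THE key single-variable identity -/
lemma Esum_eq (t : ℕ) :
    ∑ k ∈ Finset.range (t/2+1),
        (-1:K)^k * q^(k*(k-1)) * qPoch q (q^2) k * bb q t (2*k)
      = q^(Nat.choose t 2) := by
  have step1 : ∑ k ∈ Finset.range (t/2+1),
      (-1:K)^k * q^(k*(k-1)) * qPoch q (q^2) k * bb q t (2*k)
    = ∑ j ∈ Finset.range (t+1),
        (if Even j then (-1:K)^(j/2) * q^((j/2)*((j/2)-1)) * qPoch q (q^2) (j/2) else 0)
          * bb q t j := by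
    rw [even_collapse
        (fun j => (if Even j then (-1:K)^(j/2) * q^((j/2)*((j/2)-1)) * qPoch q (q^2) (j/2) else 0)
          * bb q t j) t (fun j hj => by simp only [if_neg hj, zero_mul])]
    apply Finset.sum_congr rfl
    intro k _
    rw [if_pos (even_two_mul k), show 2*k/2 = k by omega]
  rw [step1]
  have step2 : ∀ j ∈ Finset.range (t+1),
      (if Even j then (-1:K)^(j/2) * q^((j/2)*((j/2)-1)) * qPoch q (q^2) (j/2) else 0)
          * bb q t j
        = ∑ u ∈ Finset.range (j+1),
            (-1:K)^u * q^(Nat.choose u 2 + Nat.choose (j-u) 2) * (bb q t u * bb q (t-u) (j-u)) := by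
    intro j hj
    have hj' : j ≤ t := by have := Finset.mem_range.1 hj; omega
    rw [← Wsumval q hq j]
    simp only [Wsum]
    rw [Finset.sum_mul]
    apply Finset.sum_congr rfl
    intro u hu
    have hu' : u ≤ j := by have := Finset.mem_range.1 hu; omega
    rw [mul_assoc, mul_comm (bb q j u) (bb q t j), revision q hq hu' hj']
  rw [Finset.sum_congr rfl step2, tri_swap t
      (fun j u => (-1:K)^u * q^(Nat.choose u 2 + Nat.choose (j-u) 2) * (bb q t u * bb q (t-u) (j-u)))]
  have step3 : ∀ u ∈ Finset.range (t+1),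
      (∑ v ∈ Finset.range (t+1-u),
        (-1:K)^u * q^(Nat.choose u 2 + Nat.choose (u+v-u) 2) * (bb q t u * bb q (t-u) (u+v-u)))
        = (-1:K)^u * q^(Nat.choose u 2) * qPoch (-1:K) q (t-u) * bb q t u := by
    intro u hu
    have hu' : u ≤ t := by have := Finset.mem_range.1 hu; omega
    have inner : ∑ v ∈ Finset.range (t+1-u),
        (-1:K)^u * q^(Nat.choose u 2 + Nat.choose (u+v-u) 2) * (bb q t u * bb q (t-u) (u+v-u))
      = ((-1:K)^u * q^(Nat.choose u 2) * bb q t u) *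
          ∑ v ∈ Finset.range ((t-u)+1), q^(Nat.choose v 2) * (1:K)^v * bb q (t-u) v := by
      rw [show t+1-u = (t-u)+1 by omega, Finset.mul_sum]
      apply Finset.sum_congr rfl
      intro v _
      rw [show u+v-u = v by omega, pow_add, one_pow]
      ring
    rw [inner, gauss q hq 1 (t-u)]
    ring
  rw [Finset.sum_congr rfl step3]
  have hp := (Pval q hq t).1
  simp only [Psum] at hp
  exact hp

/-- pointwise product identity -/
lemma L1 {n k t : ℕ} (h2k : 2*k ≤ t) (ht : t ≤ 2*n+1) :
    qBinom (q^2) n k * (qPoch q (q^2) (n+1) / qPoch q (q^2) (n-k+1))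
        * qBinom q (2*(n-k)+1) (t-2*k)
      = qBinom q (2*n+1) t * qBinom q t (2*k) * qPoch q (q^2) k := by
  have hk : k ≤ n := by omega
  obtain ⟨m, rfl⟩ := Nat.exists_eq_add_of_le hk   -- n = k + m
  obtain ⟨s, rfl⟩ := Nat.exists_eq_add_of_le h2k  -- t = 2k + s
  have hs : s ≤ 2*m+1 := by omega
  obtain ⟨r, hr⟩ := Nat.exists_eq_add_of_le hs    -- 2m+1 = s + r
  rw [qBinom, qBinom, qBinom, qBinom,
      show k+m-k+1 = m+1 by omega,
      show k+m-k = m by omega,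
      show 2*k+s-2*k = s by omega,
      show 2*m+1-s = r by omega,
      show 2*(k+m)+1-(2*k+s) = r by omega]
  rw [show (2*(k+m)+1 : ℕ) = 2*(k+m)+1 from rfl, parity_odd q hq (k+m),
      parity_odd q hq m, parity_even q hq k]
  have e1 := hP q hq s; have e2 := hP q hq r; have e3 := hP q hq (2*k+s)
  have f1 := hP2 q hq k; have f2 := hP2 q hq m; have f3 := hP2 q hq (k+m)
  have g1 := hR q hq (m+1); have g2 := hR q hq (k+m+1); have g3 := hR q hq k
  field_simp


theorem ocx_main (a : K) (n : ℕ) :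
    ∑ k ∈ Finset.range (n + 1),
        qBinom (q ^ 2) n k * (-1 : K) ^ k * a ^ (2 * k) * q ^ (2 * Nat.choose k 2) *
          ((1 / qPoch q (q ^ 2) (n - k + 1)) *
            ∑ s ∈ Finset.range (2 * (n - k) + 2), qBinom q (2 * (n - k) + 1) s * a ^ s) =
      qPoch (-a) q (2 * n + 1) / qPoch q (q ^ 2) (n + 1) := by

  rw [eq_div_iff (hR q hq (n+1)), Finset.sum_mul]
  have expand : ∀ k ∈ Finset.range (n+1),
      (qBinom (q ^ 2) n k * (-1 : K) ^ k * a ^ (2 * k) * q ^ (2 * Nat.choose k 2) *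
          ((1 / qPoch q (q ^ 2) (n - k + 1)) *
            ∑ s ∈ Finset.range (2 * (n - k) + 2), qBinom q (2 * (n - k) + 1) s * a ^ s))
        * qPoch q (q^2) (n+1)
      = ∑ s ∈ Finset.range (2 * (n - k) + 2),
          (qBinom (q ^ 2) n k * (-1 : K) ^ k * q ^ (2 * Nat.choose k 2) *
            (qPoch q (q^2) (n+1) / qPoch q (q ^ 2) (n - k + 1)) *
            qBinom q (2 * (n - k) + 1) s) * (a ^ (2*k) * a ^ s) := by
    intro k _
    rw [show (qBinom (q ^ 2) n k * (-1 : K) ^ k * a ^ (2 * k) * q ^ (2 * Nat.choose k 2) *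
          ((1 / qPoch q (q ^ 2) (n - k + 1)) *
            ∑ s ∈ Finset.range (2 * (n - k) + 2), qBinom q (2 * (n - k) + 1) s * a ^ s))
        * qPoch q (q^2) (n+1)
      = (qBinom (q ^ 2) n k * (-1 : K) ^ k * a ^ (2 * k) * q ^ (2 * Nat.choose k 2) *
          (qPoch q (q^2) (n+1) / qPoch q (q ^ 2) (n - k + 1))) *
            ∑ s ∈ Finset.range (2 * (n - k) + 2), qBinom q (2 * (n - k) + 1) s * a ^ s
        by ring]
    rw [Finset.mul_sum]
    apply Finset.sum_congr rfl
    intro s _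
    ring
  rw [Finset.sum_congr rfl expand,
      ocx_reindex n (fun k s =>
        (qBinom (q ^ 2) n k * (-1 : K) ^ k * q ^ (2 * Nat.choose k 2) *
            (qPoch q (q^2) (n+1) / qPoch q (q ^ 2) (n - k + 1)) *
            qBinom q (2 * (n - k) + 1) s) * (a ^ (2*k) * a ^ s))]
  have inner : ∀ t ∈ Finset.range (2*n+2),
      (∑ k ∈ Finset.range (t/2+1),
        (qBinom (q ^ 2) n k * (-1 : K) ^ k * q ^ (2 * Nat.choose k 2) *
            (qPoch q (q^2) (n+1) / qPoch q (q ^ 2) (n - k + 1)) *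
            qBinom q (2 * (n - k) + 1) (t-2*k)) * (a ^ (2*k) * a ^ (t-2*k)))
      = q^(Nat.choose t 2) * a^t * bb q (2*n+1) t := by
    intro t htm
    have ht : t ≤ 2*n+1 := by have := Finset.mem_range.1 htm; omega
    have e1 : ∀ k ∈ Finset.range (t/2+1),
        (qBinom (q ^ 2) n k * (-1 : K) ^ k * q ^ (2 * Nat.choose k 2) *
            (qPoch q (q^2) (n+1) / qPoch q (q ^ 2) (n - k + 1)) *
            qBinom q (2 * (n - k) + 1) (t-2*k)) * (a ^ (2*k) * a ^ (t-2*k))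
          = (bb q (2*n+1) t * a^t) *
              ((-1:K)^k * q^(k*(k-1)) * qPoch q (q^2) k * bb q t (2*k)) := by
      intro k hk
      have h2k : 2*k ≤ t := by have := Finset.mem_range.1 hk; omega
      have ha : a^(2*k) * a^(t-2*k) = a^t := by
        rw [← pow_add]; congr 1; omega
      rw [ha, ocx_twoC k]
      rw [show qBinom (q ^ 2) n k * (-1 : K) ^ k * q ^ (k*(k-1)) *
            (qPoch q (q^2) (n+1) / qPoch q (q ^ 2) (n - k + 1)) *
            qBinom q (2 * (n - k) + 1) (t-2*k)
          = ((-1 : K) ^ k * q ^ (k*(k-1))) *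
            (qBinom (q ^ 2) n k * (qPoch q (q^2) (n+1) / qPoch q (q ^ 2) (n - k + 1)) *
              qBinom q (2 * (n - k) + 1) (t-2*k)) by ring]
      rw [L1 q hq h2k ht, bb_of_le q hq ht, bb_of_le q hq h2k]
      ring
    rw [Finset.sum_congr rfl e1, ← Finset.mul_sum, Esum_eq q hq t]
    ring
  rw [Finset.sum_congr rfl inner]
  rw [show 2*n+2 = (2*n+1)+1 from rfl, ← gauss q hq a (2*n+1)]


end OCX
/-- the ε = 1 case of Proposition 1, written out explicitly. -/
theorem odd_case_explicit {K : Type*} [Field K] (a q : K)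
    (hq : ∀ i : ℕ, 1 ≤ i → q ^ i ≠ 1) (n : ℕ) :
    ∑ k ∈ Finset.range (n + 1),
        qBinom (q ^ 2) n k * (-1 : K) ^ k * a ^ (2 * k) * q ^ (2 * Nat.choose k 2) *
          ((1 / qPoch q (q ^ 2) (n - k + 1)) *
            ∑ s ∈ Finset.range (2 * (n - k) + 2), qBinom q (2 * (n - k) + 1) s * a ^ s) =
      qPoch (-a) q (2 * n + 1) / qPoch q (q ^ 2) (n + 1) := by
  exact ocx_main q hq a n
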